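/- Let λ, μ be nonzero real parameters with λ, μ ≠ −1 and μ ≠ λ, and let q : ℝ³ → ℝ be a smooth function of (t,x,y) with q_x nowhere vanishing satisfying q_y q_{tx} = (λ+1) q_t q_{xy} − λ q_x q_{ty}. If r : ℝ³ → ℝ is smooth with r_x nowhere vanishing and satisfies r_t = (μ(λ+1)/(λ(μ+1)))(q_t/q_x) r_x and r_y = (μ/λ)(q_y/q_x) r_x, then r satisfies r_y r_{tx} = (μ+1) r_t r_{xy} − μ r_x r_{ty}. -/

import Mathlib

/-- Partial derivative of `f : (Fin n → ℝ) → ℝ` in the `i`-th coordinate direction. -/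
noncomputable def pd (n : ℕ) (i : Fin n) (f : (Fin n → ℝ) → ℝ) : (Fin n → ℝ) → ℝ :=
  fun p => fderiv ℝ f p (Pi.single i 1)

lemma pd_smooth {f : (Fin 3 → ℝ) → ℝ} (hf : ContDiff ℝ (⊤ : ℕ∞) f) (i : Fin 3) :
    ContDiff ℝ (⊤ : ℕ∞) (pd 3 i f) :=
  (hf.fderiv_right (by simp)).clm_apply contDiff_const

lemma pd_mul {f g : (Fin 3 → ℝ) → ℝ} {p : Fin 3 → ℝ} (i : Fin 3)
    (hf : DifferentiableAt ℝ f p) (hg : DifferentiableAt ℝ g p) :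
    pd 3 i (fun x => f x * g x) p = pd 3 i f p * g p + f p * pd 3 i g p := by
  unfold pd
  rw [fderiv_fun_mul hf hg]
  simp [ContinuousLinearMap.add_apply, ContinuousLinearMap.smul_apply, smul_eq_mul]
  ring

lemma pd_const_mul {g : (Fin 3 → ℝ) → ℝ} {p : Fin 3 → ℝ} (i : Fin 3) (K : ℝ)
    (hg : DifferentiableAt ℝ g p) :
    pd 3 i (fun x => K * g x) p = K * pd 3 i g p := by
  unfold pd
  rw [fderiv_const_mul hg]
  simp

lemma pd_comm {f : (Fin 3 → ℝ) → ℝ} (hf : ContDiff ℝ (⊤ : ℕ∞) f) (i j : Fin 3) (p : Fin 3 → ℝ) :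
    pd 3 i (pd 3 j f) p = pd 3 j (pd 3 i f) p := by
  have hsym : IsSymmSndFDerivAt ℝ f p := hf.contDiffAt.isSymmSndFDerivAt (by rw [minSmoothness_of_isRCLikeNormedField]; exact WithTop.coe_le_coe.mpr le_top)
  have hdf : DifferentiableAt ℝ (fderiv ℝ f) p :=
    ((hf.fderiv_right (m := 1) (by exact WithTop.coe_le_coe.mpr le_top)).differentiable one_ne_zero).differentiableAt
  have key : ∀ v w : Fin 3 → ℝ,
      fderiv ℝ (fun x => fderiv ℝ f x w) p v = fderiv ℝ (fderiv ℝ f) p v w := by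
    intro v w
    have := fderiv_clm_apply hdf (differentiableAt_const w)
    rw [this]
    simp
  show fderiv ℝ (fun x => fderiv ℝ f x (Pi.single j 1)) p (Pi.single i 1) = _
  rw [key]
  rw [hsym (Pi.single i 1) (Pi.single j 1)]
  exact (key (Pi.single j 1) (Pi.single i 1)).symm

lemma key_alg (lam mu a b c u ax ay bx by_ ux uy rt ry rtx rty : ℝ)
    (hb : b ≠ 0) (hlam : lam ≠ 0) (hmu1 : mu + 1 ≠ 0)
    (hrt : rt = mu * (lam + 1) / (lam * (mu + 1)) * (a / b) * u)
    (hry : ry = mu / lam * (c / b) * u)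
    (hEx : bx * rt + b * rtx
        = mu * (lam + 1) / (lam * (mu + 1)) * (ax * u + a * ux))
    (hEy : by_ * rt + b * rty
        = mu * (lam + 1) / (lam * (mu + 1)) * (ay * u + a * uy))
    (hFx : bx * ry + b * uy = mu / lam * (by_ * u + c * ux))
    (habc : c * ax = (lam + 1) * a * by_ - lam * b * ay) :
    ry * rtx = (mu + 1) * rt * uy - mu * u * rty := by
  have hay : ay = ((lam + 1) * a * by_ - c * ax) / (lam * b) := by
    rw [eq_div_iff (mul_ne_zero hlam hb)]
    linear_combination habc
  have hrtx : rtx = (mu * (lam + 1) / (lam * (mu + 1)) * (ax * u + a * ux) - bx * rt) / b := by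
    rw [eq_div_iff hb]
    linear_combination hEx
  have huy : uy = (mu / lam * (by_ * u + c * ux) - bx * ry) / b := by
    rw [eq_div_iff hb]
    linear_combination hFx
  have hrty : rty = (mu * (lam + 1) / (lam * (mu + 1)) * (ay * u + a * uy) - by_ * rt) / b := by
    rw [eq_div_iff hb]
    linear_combination hEy
  subst hrt hry hrtx huy hrty hay
  field_simp
  ring

/-- 3D coordinates `(t,x,y) = (0,1,2)`. Zakharevich's Bäcklund transformation
`r_t = (μ(λ+1)/(λ(μ+1)))(q_t/q_x) r_x`, `r_y = (μ/λ)(q_y/q_x) r_x` maps solutions of the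
ABC-type equation with parameter `λ` to solutions with parameter `μ`. -/
theorem stmt_7 (q r : (Fin 3 → ℝ) → ℝ) (hq : ContDiff ℝ (⊤ : ℕ∞) q) (hr : ContDiff ℝ (⊤ : ℕ∞) r)
    (lam mu : ℝ) (hlam : lam ≠ 0) (hmu : mu ≠ 0)
    (hlam' : lam ≠ -1) (hmu' : mu ≠ -1) (hne : mu ≠ lam)
    (hqx : ∀ p, pd 3 1 q p ≠ 0) (hrx : ∀ p, pd 3 1 r p ≠ 0)
    (habc : ∀ p, pd 3 2 q p * pd 3 1 (pd 3 0 q) p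
        = (lam + 1) * pd 3 0 q p * pd 3 2 (pd 3 1 q) p
          - lam * pd 3 1 q p * pd 3 2 (pd 3 0 q) p)
    (h1 : ∀ p, pd 3 0 r p
        = (mu * (lam + 1) / (lam * (mu + 1))) * (pd 3 0 q p / pd 3 1 q p) * pd 3 1 r p)
    (h2 : ∀ p, pd 3 2 r p = (mu / lam) * (pd 3 2 q p / pd 3 1 q p) * pd 3 1 r p) :
    ∀ p, pd 3 2 r p * pd 3 1 (pd 3 0 r) p
        = (mu + 1) * pd 3 0 r p * pd 3 2 (pd 3 1 r) p
          - mu * pd 3 1 r p * pd 3 2 (pd 3 0 r) p := by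
  intro p
  have hmu1 : mu + 1 ≠ 0 := fun h => hmu' (by linarith)
  -- differentiability of first partials
  have dq0 : ∀ x, DifferentiableAt ℝ (pd 3 0 q) x :=
    fun x => ((pd_smooth hq 0).differentiable (by simp)).differentiableAt
  have dq1 : ∀ x, DifferentiableAt ℝ (pd 3 1 q) x :=
    fun x => ((pd_smooth hq 1).differentiable (by simp)).differentiableAt
  have dq2 : ∀ x, DifferentiableAt ℝ (pd 3 2 q) x :=
    fun x => ((pd_smooth hq 2).differentiable (by simp)).differentiableAt
  have dr0 : ∀ x, DifferentiableAt ℝ (pd 3 0 r) x :=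
    fun x => ((pd_smooth hr 0).differentiable (by simp)).differentiableAt
  have dr1 : ∀ x, DifferentiableAt ℝ (pd 3 1 r) x :=
    fun x => ((pd_smooth hr 1).differentiable (by simp)).differentiableAt
  have dr2 : ∀ x, DifferentiableAt ℝ (pd 3 2 r) x :=
    fun x => ((pd_smooth hr 2).differentiable (by simp)).differentiableAt
  -- functional identities with cleared denominators
  have H1 : (fun x => pd 3 1 q x * pd 3 0 r x)
      = (fun x => (mu * (lam + 1) / (lam * (mu + 1))) * (pd 3 0 q x * pd 3 1 r x)) := by
    funext x
    rw [h1 x]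
    field_simp [hqx x]
  have H2 : (fun x => pd 3 1 q x * pd 3 2 r x)
      = (fun x => (mu / lam) * (pd 3 2 q x * pd 3 1 r x)) := by
    funext x
    rw [h2 x]
    field_simp [hqx x]
  -- differentiate H1 in x (index 1)
  have eEx : pd 3 1 (pd 3 1 q) p * pd 3 0 r p + pd 3 1 q p * pd 3 1 (pd 3 0 r) p
      = mu * (lam + 1) / (lam * (mu + 1))
        * (pd 3 1 (pd 3 0 q) p * pd 3 1 r p + pd 3 0 q p * pd 3 1 (pd 3 1 r) p) := by
    rw [← pd_mul 1 (dq1 p) (dr0 p), H1,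
      pd_const_mul (g := fun x => pd 3 0 q x * pd 3 1 r x) 1 _ ((dq0 p).mul (dr1 p)), pd_mul 1 (dq0 p) (dr1 p)]
  -- differentiate H1 in y (index 2)
  have eEy : pd 3 2 (pd 3 1 q) p * pd 3 0 r p + pd 3 1 q p * pd 3 2 (pd 3 0 r) p
      = mu * (lam + 1) / (lam * (mu + 1))
        * (pd 3 2 (pd 3 0 q) p * pd 3 1 r p + pd 3 0 q p * pd 3 2 (pd 3 1 r) p) := by
    rw [← pd_mul 2 (dq1 p) (dr0 p), H1,
      pd_const_mul (g := fun x => pd 3 0 q x * pd 3 1 r x) 2 _ ((dq0 p).mul (dr1 p)), pd_mul 2 (dq0 p) (dr1 p)]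
  -- differentiate H2 in x (index 1), using symmetry of second derivatives
  have eFx : pd 3 1 (pd 3 1 q) p * pd 3 2 r p + pd 3 1 q p * pd 3 2 (pd 3 1 r) p
      = mu / lam
        * (pd 3 2 (pd 3 1 q) p * pd 3 1 r p + pd 3 2 q p * pd 3 1 (pd 3 1 r) p) := by
    have h := pd_mul 1 (dq1 p) (dr2 p)
    rw [H2, pd_const_mul (g := fun x => pd 3 2 q x * pd 3 1 r x) 1 _ ((dq2 p).mul (dr1 p)), pd_mul 1 (dq2 p) (dr1 p)] at h
    rw [← pd_comm hr 1 2, ← pd_comm hq 1 2]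
    linarith [h]
  exact key_alg lam mu (pd 3 0 q p) (pd 3 1 q p) (pd 3 2 q p) (pd 3 1 r p)
    (pd 3 1 (pd 3 0 q) p) (pd 3 2 (pd 3 0 q) p) (pd 3 1 (pd 3 1 q) p) (pd 3 2 (pd 3 1 q) p)
    (pd 3 1 (pd 3 1 r) p) (pd 3 2 (pd 3 1 r) p)
    (pd 3 0 r p) (pd 3 2 r p) (pd 3 1 (pd 3 0 r) p) (pd 3 2 (pd 3 0 r) p)
    (hqx p) hlam hmu1 (h1 p) (h2 p) eEx eEy eFx (habc p)
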